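/- In a type theory with the interval, homogeneous path types, the connection sq, and the strict coercion coe_0 + σ (where coe_0 along a constant family is the identity: coe_0(λx.A, a) ≡ a), the identity-type eliminator J defined via coe_0 satisfies the definitional computation rule J(D, d, a, a, refl(a)) ≡ d[a]. -/

import Mathlib

/-- A (shallow) model of a type theory with an interval type `I` (endpoints `lf`, `rt`),
the connection `sq`, heterogeneous path types `Path` and coercion `coe1`
(`coe0` is the special case transporting from `lf` to `rt`). -/
structure CTT where
  Ty : Type
  Tm : Ty → Type
  I : Ty
  lf : Tm I
  rt : Tm I
  sq : Tm I → Tm I → Tm I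
  sq_il : ∀ i, sq i lf = lf
  sq_lj : ∀ j, sq lf j = lf
  sq_rj : ∀ j, sq rt j = j
  Path : (A : Tm I → Ty) → Tm (A lf) → Tm (A rt) → Ty
  path : {A : Tm I → Ty} → (f : ∀ i, Tm (A i)) → Tm (Path A (f lf) (f rt))
  pat : {A : Tm I → Ty} → {a : Tm (A lf)} → {a' : Tm (A rt)} →
      Tm (Path A a a') → (i : Tm I) → Tm (A i)
  pat_beta : ∀ {A : Tm I → Ty} (f : ∀ i, Tm (A i)) (i : Tm I), pat (path f) i = f i
  pat_lf : ∀ {A : Tm I → Ty} {a : Tm (A lf)} {a' : Tm (A rt)} (p : Tm (Path A a a')),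
      pat p lf = a
  pat_rt : ∀ {A : Tm I → Ty} {a : Tm (A lf)} {a' : Tm (A rt)} (p : Tm (Path A a a')),
      pat p rt = a'
  path_eta : ∀ {A : Tm I → Ty} {a : Tm (A lf)} {a' : Tm (A rt)} (p : Tm (Path A a a')),
      HEq (path (fun i => pat p i)) p
  coe1 : (D : Tm I → Ty) → Tm (D lf) → (i : Tm I) → Tm (D i)
  coe1_lf : ∀ D d, coe1 D d lf = d

namespace CTT

variable (M : CTT)

/-- Homogeneous path types `a ⇝ a'`. -/
def HP (A : M.Ty) (a a' : M.Tm A) : M.Ty := M.Path (fun _ => A) a a'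

/-- `refl`. -/
def rfl' {A : M.Ty} (a : M.Tm A) : M.Tm (M.HP A a a) := M.path (fun _ => a)

/-- Coercion from the fiber over `left` to the fiber over `right`. -/
def coe0 (D : M.Tm M.I → M.Ty) (d : M.Tm (D M.lf)) : M.Tm (D M.rt) := M.coe1 D d M.rt

/-- Concatenation of homogeneous paths. -/
def conc {A : M.Ty} {a b c : M.Tm A} (p : M.Tm (M.HP A a b)) (q : M.Tm (M.HP A b c)) :
    M.Tm (M.HP A a c) :=
  cast (show M.Tm (M.HP A a (M.pat q M.rt)) = M.Tm (M.HP A a c) by erw [M.pat_rt])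
    (M.coe1 (fun i => M.HP A a (M.pat q i))
      (cast (show M.Tm (M.HP A a b) = M.Tm (M.HP A a (M.pat q M.lf)) by erw [M.pat_lf]) p) M.rt)

/-- Inversion of homogeneous paths. -/
def symm' {A : M.Ty} {a b : M.Tm A} (p : M.Tm (M.HP A a b)) : M.Tm (M.HP A b a) :=
  cast (show M.Tm (M.HP A (M.pat p M.rt) a) = M.Tm (M.HP A b a) by erw [M.pat_rt])
    (M.coe1 (fun i => M.HP A (M.pat p i) a)
      (cast (show M.Tm (M.HP A a a) = M.Tm (M.HP A (M.pat p M.lf) a) by erw [M.pat_lf])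
        (M.rfl' a)) M.rt)

/-- Action of a function on paths. -/
def apm {A B : M.Ty} (g : M.Tm A → M.Tm B) {a a' : M.Tm A} (p : M.Tm (M.HP A a a')) :
    M.Tm (M.HP B (g a) (g a')) :=
  cast (show M.Tm (M.HP B (g (M.pat p M.lf)) (g (M.pat p M.rt))) = M.Tm (M.HP B (g a) (g a'))
      by erw [M.pat_lf, M.pat_rt])
    (M.path (fun i => g (M.pat p i)))

end CTT

section
variable (M : CTT)

/-- The type family over the interval used in the definition of `J` via `coe_0`:
`i ↦ D[a, at(p, sq(i,right)), path(λj. at(p, sq(i,j)))]`. -/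
def Jfam {A : M.Ty} (D : (x y : M.Tm A) → M.Tm (M.HP A x y) → M.Ty)
    {a a' : M.Tm A} (p : M.Tm (M.HP A a a')) : M.Tm M.I → M.Ty := fun i =>
  D a (M.pat p (M.sq i M.rt))
    (cast (show M.Tm (M.HP A (M.pat p (M.sq i M.lf)) (M.pat p (M.sq i M.rt))) =
            M.Tm (M.HP A a (M.pat p (M.sq i M.rt))) by erw [M.sq_il, M.pat_lf])
      (M.path fun j => M.pat p (M.sq i j)))

/-- The eliminator `J(D, d, a, a', p) := coe_0(λi. D[a, at(p,sq(i,right)), path(λj.at(p,sq(i,j)))], d[a])`,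
taking the (type-theoretically forced) coercion of `d[a]` into the fiber over `left` as input. -/
def Jdef {A : M.Ty} (D : (x y : M.Tm A) → M.Tm (M.HP A x y) → M.Ty)
    {a a' : M.Tm A} (p : M.Tm (M.HP A a a')) (d' : M.Tm (Jfam M D p M.lf)) :
    M.Tm (Jfam M D p M.rt) :=
  M.coe0 (Jfam M D p) d'

namespace CTT

theorem coe0_heq_congr {F G : M.Tm M.I → M.Ty} (h : F = G) {x : M.Tm (F M.lf)}
    {y : M.Tm (G M.lf)} (hxy : HEq x y) : HEq (M.coe0 F x) (M.coe0 G y) := by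
  subst h; cases hxy; rfl

theorem pat_rfl' {A : M.Ty} (a : M.Tm A) (i : M.Tm M.I) : M.pat (M.rfl' a) i = a :=
  M.pat_beta _ i

theorem path_heq_rfl' {A : M.Ty} {a : M.Tm A} {f : M.Tm M.I → M.Tm A} (hf : ∀ i, f i = a) :
    HEq (M.path (A := fun _ => A) f) (M.rfl' a) := by
  obtain rfl : f = fun _ => a := funext hf
  rfl

end CTT

/-- `at(refl a, -)` is constant, so whatever `sq` does, every square `path(λj. at(refl a, sq(i,j)))`
is `refl a` again. -/
theorem Jfam_rfl' {A : M.Ty} (D : (x y : M.Tm A) → M.Tm (M.HP A x y) → M.Ty) (a : M.Tm A) :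
    Jfam M D (M.rfl' a) = fun _ => D a a (M.rfl' a) := by
  funext i
  dsimp only [Jfam]
  congr 1
  · exact M.pat_rfl' a _
  · exact (cast_heq _ _).trans (M.path_heq_rfl' fun j => M.pat_rfl' a _)

/-- In a type theory with the interval, homogeneous path types, the
connection `sq`, and the strict coercion `coe_0 + σ` (coercion along a constant family is
the identity), the identity-type eliminator `J` defined via `coe_0` satisfies the
definitional computation rule `J(D,d,a,a,refl(a)) ≡ d[a]`. -/
theorem stmt8 (hσ : ∀ (A : M.Ty) (a : M.Tm A), M.coe0 (fun _ => A) a = a)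
    {A : M.Ty} (D : (x y : M.Tm A) → M.Tm (M.HP A x y) → M.Ty)
    (d : ∀ x : M.Tm A, M.Tm (D x x (M.rfl' x))) (a : M.Tm A)
    (d' : M.Tm (Jfam M D (M.rfl' a) M.lf)) (hd : HEq d' (d a)) :
    HEq (Jdef M D (M.rfl' a) d') (d a) :=
  (M.coe0_heq_congr (Jfam_rfl' M D a) hd).trans (heq_of_eq (hσ _ (d a)))
end
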